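/- Suppose ψ₀(λ) = λ^{1+β} ℓ(λ) with ℓ(λ) ≥ C > 0 for all λ > 0 and β ∈ (0,1). Then for any bounded measurable ξ: [0,t] → ℝ with ξ(0) = 0, any solution v of ∂_s v(s) = e^{ξ(s)} ψ₀(v(s) e^{-ξ(s)}) on [0,t] with terminal value v(t) = λ satisfies v(0) ≤ (λ^{-β} + βC ∫_0^t e^{-βξ(u)} du)^{-1/β} ≤ (βC ∫_0^t e^{-βξ(u)} du)^{-1/β}. -/

import Mathlib

open MeasureTheory Set Real

/-!
The substitution `g = v ^ (-β)` linearises the comparison equation `v' = C e^{-βξ} v^{1+β}`: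
since `e^{ξ} ψ₀(v e^{-ξ}) ≥ C e^{-βξ} v^{1+β}`, the derivative of `g` is at most `-β C e^{-βξ}`.
Integrating over `[0, t]` gives `v(0)^{-β} ≥ λ^{-β} + β C ∫₀ᵗ e^{-βξ}`, and raising both sides to
the power `-1/β` gives both inequalities.
-/

lemma intervalIntegrable_exp_mul_of_abs_le {ξ : ℝ → ℝ} (hξ : Measurable ξ) {M : ℝ}
    (hM : ∀ u, |ξ u| ≤ M) (c a b : ℝ) :
    IntervalIntegrable (fun u => exp (c * ξ u)) volume a b := by
  refine (intervalIntegrable_const (c := exp (|c| * M))).mono_fun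
    (hξ.const_mul c).exp.aestronglyMeasurable (Filter.Eventually.of_forall fun u => ?_)
  have hcξ : c * ξ u ≤ |c| * M :=
    (le_abs_self _).trans ((abs_mul c (ξ u)).trans_le
      (mul_le_mul_of_nonneg_left (hM u) (abs_nonneg c)))
  simpa only [norm_eq_abs, abs_exp] using exp_le_exp.2 hcξ

lemma mul_exp_mul_rpow_le_exp_mul {β C : ℝ} {ψ₀ ℓ : ℝ → ℝ}
    (hψ : ∀ x : ℝ, 0 < x → ψ₀ x = x ^ (1 + β) * ℓ x) (hℓ : ∀ x : ℝ, 0 < x → C ≤ ℓ x)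
    {x : ℝ} (hx : 0 < x) (y : ℝ) :
    C * exp (-β * y) * x ^ (1 + β) ≤ exp y * ψ₀ (x * exp (-y)) := by
  have hxy : 0 < x * exp (-y) := mul_pos hx (exp_pos _)
  have hpow : exp y * (x * exp (-y)) ^ (1 + β) = exp (-β * y) * x ^ (1 + β) := by
    rw [mul_rpow hx.le (exp_pos _).le, ← exp_mul, mul_left_comm, ← exp_add]
    ring_nf
  calc C * exp (-β * y) * x ^ (1 + β)
      = C * (exp y * (x * exp (-y)) ^ (1 + β)) := by rw [hpow]; ring
    _ ≤ ℓ (x * exp (-y)) * (exp y * (x * exp (-y)) ^ (1 + β)) :=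
        mul_le_mul_of_nonneg_right (hℓ _ hxy) (by positivity)
    _ = exp y * ψ₀ (x * exp (-y)) := by rw [hψ _ hxy]; ring

theorem rpow_neg_add_integral_le_of_hasDerivAt {β a b : ℝ} (hβ : 0 < β) (hab : a ≤ b)
    {v f w : ℝ → ℝ} (hv : ∀ s ∈ Icc a b, 0 < v s) (hvf : ∀ s ∈ Icc a b, HasDerivAt v (f s) s)
    (hfw : ∀ s ∈ Icc a b, w s * v s ^ (1 + β) ≤ f s) (hw : IntervalIntegrable w volume a b) :
    v b ^ (-β) + β * ∫ s in a..b, w s ≤ v a ^ (-β) := by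
  have hderiv : ∀ s ∈ Icc a b, HasDerivAt (fun s => v s ^ (-β)) (f s * (-β) * v s ^ (-β - 1)) s :=
    fun s hs => (hvf s hs).rpow_const (Or.inl (hv s hs).ne')
  have hslope : ∀ s ∈ Icc a b, f s * (-β) * v s ^ (-β - 1) ≤ -β * w s := by
    intro s hs
    have hcancel : v s ^ (1 + β) * v s ^ (-β - 1) = 1 := by
      rw [← rpow_add (hv s hs), show 1 + β + (-β - 1) = 0 by ring, rpow_zero]
    have hle := mul_le_mul_of_nonneg_right (hfw s hs)
      (mul_nonneg hβ.le (rpow_nonneg (hv s hs).le (-β - 1)))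
    calc f s * (-β) * v s ^ (-β - 1) = -(f s * (β * v s ^ (-β - 1))) := by ring
      _ ≤ -(w s * v s ^ (1 + β) * (β * v s ^ (-β - 1))) := neg_le_neg hle
      _ = -β * w s * (v s ^ (1 + β) * v s ^ (-β - 1)) := by ring
      _ = -β * w s := by rw [hcancel, mul_one]
  have hFTC := intervalIntegral.sub_le_integral_of_hasDeriv_right_of_le hab
    (fun s hs => (hderiv s hs).continuousAt.continuousWithinAt)
    (fun s hs => (hderiv s (Ioo_subset_Icc_self hs)).hasDerivWithinAt)
    ((intervalIntegrable_iff_integrableOn_Icc_of_le hab).1 (hw.const_mul (-β)))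
    (fun s hs => hslope s (Ioo_subset_Icc_self hs))
  rw [intervalIntegral.integral_const_mul] at hFTC
  linarith

lemma le_rpow_neg_one_div_of_le_rpow_neg {β x A : ℝ} (hβ : 0 < β) (hx : 0 < x) (hA : 0 < A)
    (h : A ≤ x ^ (-β)) : x ≤ A ^ (-1 / β) := by
  calc x = (x ^ (-β)) ^ (-1 / β) := by
        rw [← rpow_mul hx.le, show -β * (-1 / β) = 1 by field_simp, rpow_one]
    _ ≤ A ^ (-1 / β) :=
        rpow_le_rpow_of_nonpos hA h (div_nonpos_of_nonpos_of_nonneg (by norm_num) hβ.le)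

theorem cumulant_comparison_bound_general
    (β C t l : ℝ) (hβ : β ∈ Set.Ioo (0:ℝ) 1) (hC : 0 < C) (ht : 0 < t) (hl : 0 < l)
    (ψ₀ ℓ : ℝ → ℝ)
    (hψ : ∀ x : ℝ, 0 < x → ψ₀ x = x ^ (1 + β) * ℓ x)
    (hℓ : ∀ x : ℝ, 0 < x → C ≤ ℓ x)
    (ξ : ℝ → ℝ) (hξmeas : Measurable ξ) (M : ℝ) (hξbdd : ∀ u, |ξ u| ≤ M)
    (v : ℝ → ℝ) (hv_pos : ∀ s ∈ Set.Icc 0 t, 0 < v s)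
    (hv_diff : ∀ s ∈ Set.Icc 0 t,
      HasDerivAt v (Real.exp (ξ s) * ψ₀ (v s * Real.exp (-ξ s))) s)
    (hvt : v t = l) :
    v 0 ≤ (l ^ (-β) + β * C * ∫ u in (0:ℝ)..t, Real.exp (-β * ξ u)) ^ (-1/β) ∧
    (l ^ (-β) + β * C * ∫ u in (0:ℝ)..t, Real.exp (-β * ξ u)) ^ (-1/β) ≤
      (β * C * ∫ u in (0:ℝ)..t, Real.exp (-β * ξ u)) ^ (-1/β) := by
  obtain ⟨hβ, -⟩ := hβ
  have hint := intervalIntegrable_exp_mul_of_abs_le hξmeas hξbdd (-β) 0 t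
  have hI : 0 < β * C * ∫ u in (0:ℝ)..t, exp (-β * ξ u) :=
    mul_pos (mul_pos hβ hC)
      (intervalIntegral.intervalIntegral_pos_of_pos hint (fun _ => exp_pos _) ht)
  have hcomp := rpow_neg_add_integral_le_of_hasDerivAt hβ ht.le hv_pos hv_diff
    (fun s hs => mul_exp_mul_rpow_le_exp_mul hψ hℓ (hv_pos s hs) (ξ s)) (hint.const_mul C)
  rw [hvt, intervalIntegral.integral_const_mul, ← mul_assoc] at hcomp
  have hlβ : 0 ≤ l ^ (-β) := rpow_nonneg hl.le _
  exact ⟨le_rpow_neg_one_div_of_le_rpow_neg hβ (hv_pos 0 ⟨le_rfl, ht.le⟩) (by positivity) hcomp,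
    rpow_le_rpow_of_nonpos hI (le_add_of_nonneg_left hlβ)
      (div_nonpos_of_nonpos_of_nonneg (by norm_num) hβ.le)⟩

/-- comparison of the cumulant with the explicit stable solution when
ψ₀(λ) = λ^{1+β} ℓ(λ) with ℓ ≥ C > 0. -/
theorem cumulant_comparison_bound
    (β C t l : ℝ) (hβ : β ∈ Set.Ioo (0:ℝ) 1) (hC : 0 < C) (ht : 0 < t) (hl : 0 < l)
    (ψ₀ ℓ : ℝ → ℝ)
    (hψ : ∀ x : ℝ, 0 < x → ψ₀ x = x ^ (1 + β) * ℓ x)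
    (hℓ : ∀ x : ℝ, 0 < x → C ≤ ℓ x)
    (ξ : ℝ → ℝ) (hξmeas : Measurable ξ) (M : ℝ) (hξbdd : ∀ u, |ξ u| ≤ M)
    (hξ0 : ξ 0 = 0)
    (v : ℝ → ℝ) (hv_pos : ∀ s ∈ Set.Icc 0 t, 0 < v s)
    (hv_diff : ∀ s ∈ Set.Icc 0 t,
      HasDerivAt v (Real.exp (ξ s) * ψ₀ (v s * Real.exp (-ξ s))) s)
    (hvt : v t = l) :
    v 0 ≤ (l ^ (-β) + β * C * ∫ u in (0:ℝ)..t, Real.exp (-β * ξ u)) ^ (-1/β) ∧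
    (l ^ (-β) + β * C * ∫ u in (0:ℝ)..t, Real.exp (-β * ξ u)) ^ (-1/β) ≤
      (β * C * ∫ u in (0:ℝ)..t, Real.exp (-β * ξ u)) ^ (-1/β) :=
  cumulant_comparison_bound_general β C t l hβ hC ht hl ψ₀ ℓ hψ hℓ ξ hξmeas M hξbdd v hv_pos hv_diff
    hvt
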